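/- arXiv:2304.10094 — 3 statements merged into one kernel-verified Lean document; each statement's English description precedes it below -/
import Mathlib

section
/- Let P_{5,2} be the Petersen graph and K_{1,n} the star with n ≥ 3 leaves. Then every radio labeling of P_{5,2} □ K_{1,n} has span at least 10n + 27; in particular, rn(P_{5,2} □ K_{1,n}) ≥ 10n + 27. -/
/-!
Common definitions: radio labelings, weight centers, levels, branches,
generalized Petersen graphs, stars.
-/

open Finset

namespace RadioPaper

variable {V : Type*}

/-- The diameter of a finite graph: the maximum distance between two vertices. -/
noncomputable def graphDiam [Fintype V] (G : SimpleGraph V) : ℕ :=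
  Finset.univ.sup fun p : V × V => G.dist p.1 p.2

/-- A radio labeling of `G`: `|f u - f v| ≥ diam G + 1 - d(u,v)` for distinct `u, v`. -/
def IsRadioLabeling [Fintype V] (G : SimpleGraph V) (f : V → ℕ) : Prop :=
  ∀ u v : V, u ≠ v → (graphDiam G : ℤ) + 1 - G.dist u v ≤ |(f u : ℤ) - (f v : ℤ)|

/-- The span of a labeling: the maximum of `|f u - f v|` over all pairs of vertices. -/
noncomputable def radioSpan [Fintype V] (f : V → ℕ) : ℕ :=
  Finset.univ.sup fun p : V × V => f p.1 - f p.2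

/-- The radio number of `G`: the minimum span over all radio labelings. -/
noncomputable def radioNumber [Fintype V] (G : SimpleGraph V) : ℕ :=
  sInf {s : ℕ | ∃ f : V → ℕ, IsRadioLabeling G f ∧ radioSpan f = s}

/-- The weight of a graph at a vertex `u`: the sum of distances from `u` to all vertices. -/
noncomputable def weight [Fintype V] (T : SimpleGraph V) (u : V) : ℕ :=
  ∑ v : V, T.dist u v

/-- The set of weight centers: vertices minimizing the weight. -/
def weightCenters [Fintype V] (T : SimpleGraph V) : Set V :=
  {c | ∀ u : V, weight T c ≤ weight T u}

/-- The level of a vertex: its distance to a nearest weight center. -/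
noncomputable def level [Fintype V] (T : SimpleGraph V) (x : V) : ℕ :=
  sInf {d : ℕ | ∃ w ∈ weightCenters T, T.dist x w = d}

/-- The total level of `T`: sum of the levels of all vertices. -/
noncomputable def totalLevel [Fintype V] (T : SimpleGraph V) : ℕ :=
  ∑ x : V, level T x

/-- `ε(T) = 1` if `T` has a unique weight center, and `0` otherwise (two centers). -/
noncomputable def eps [Fintype V] (T : SimpleGraph V) : ℕ :=
  if (weightCenters T).ncard = 1 then 1 else 0

/-- `z` is an ancestor of `x` in the tree rooted at its weight center(s):
`z` lies on the path from some weight center to `x`. -/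
def IsAncestor [Fintype V] (T : SimpleGraph V) (z x : V) : Prop :=
  ∃ w ∈ weightCenters T, T.dist w z + T.dist z x = T.dist w x

/-- `φ_T(x,y)`: the maximum level of a common ancestor of `x` and `y`. -/
noncomputable def phi [Fintype V] (T : SimpleGraph V) (x y : V) : ℕ :=
  sSup {l : ℕ | ∃ z : V, IsAncestor T z x ∧ IsAncestor T z y ∧ level T z = l}

/-- `x` and `y` are in opposite branches: `T` has two weight centers `w, w'` and
`x, y` lie in different components of `T - ww'`. -/
def OppositeBranches [Fintype V] (T : SimpleGraph V) (x y : V) : Prop :=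
  ∃ w w' : V, w ≠ w' ∧ weightCenters T = {w, w'} ∧
    ¬ (T.deleteEdges {s(w, w')}).Reachable x y

open Classical in
/-- `δ_T(x,y) = 1` if `T` has two weight centers and `x, y` are in opposite branches,
and `0` otherwise. -/
noncomputable def delta [Fintype V] (T : SimpleGraph V) (x y : V) : ℕ :=
  if (weightCenters T).ncard = 2 ∧ OppositeBranches T x y then 1 else 0

/-- `x` and `y` are in different branches: some weight center lies on the `x`–`y` path
(equivalently, the paths from the center to `x` and to `y` depart through different
neighbours, or one of `x, y` is a weight center). -/
def DifferentBranches [Fintype V] (T : SimpleGraph V) (x y : V) : Prop :=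
  ∃ w ∈ weightCenters T, T.dist x w + T.dist w y = T.dist x y

/-- `x` and `y` are in the same branch: both belong to the branch of `T` induced by some
non-central neighbour `u` of a weight center `w` together with all of `u`'s descendants. -/
def SameBranch [Fintype V] (T : SimpleGraph V) (x y : V) : Prop :=
  ∃ w ∈ weightCenters T, ∃ u : V, u ∉ weightCenters T ∧ T.Adj w u ∧
    T.dist w x = 1 + T.dist u x ∧ T.dist w y = 1 + T.dist u y

/-- The generalized Petersen graph `P_{m,k}`: outer vertices `(false, i)` (the `u_i`) and
inner vertices `(true, i)` (the `v_i`), with edges `u_i u_{i+1}`, `u_i v_i`, `v_i v_{i+k}`. -/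
def genPetersen (m k : ℕ) : SimpleGraph (Bool × ZMod m) :=
  SimpleGraph.fromRel fun a b =>
    (a.1 = false ∧ b.1 = false ∧ b.2 = a.2 + 1) ∨
    (a.1 = false ∧ b.1 = true ∧ a.2 = b.2) ∨
    (a.1 = true ∧ b.1 = true ∧ b.2 = a.2 + (k : ZMod m))

/-- The star `K_{1,n}`: vertex `0` is the centre, joined to the `n` leaves. -/
def starGraph (n : ℕ) : SimpleGraph (Fin (n + 1)) :=
  SimpleGraph.fromRel fun a _ => a = 0


section LowerBoundHelpers

open SimpleGraph

instance (m k : ℕ) : DecidableRel (genPetersen m k).Adj :=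
  fun a b => decidable_of_iff' _ (SimpleGraph.fromRel_adj _ a b)

lemma petersen_cases : ∀ a b : Bool × ZMod 5, a = b ∨ (genPetersen 5 2).Adj a b ∨
    ∃ c, (genPetersen 5 2).Adj a c ∧ (genPetersen 5 2).Adj c b := by decide

lemma petersen_preconnected : (genPetersen 5 2).Preconnected := by
  intro a b
  rcases petersen_cases a b with rfl | h | ⟨c, h1, h2⟩
  · rfl
  · exact h.reachable
  · exact h1.reachable.trans h2.reachable

lemma petersen_connected : (genPetersen 5 2).Connected := ⟨petersen_preconnected⟩

lemma petersen_dist_le_two (a b : Bool × ZMod 5) : (genPetersen 5 2).dist a b ≤ 2 := by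
  rcases petersen_cases a b with rfl | h | ⟨c, h1, h2⟩
  · simp [SimpleGraph.dist_self]
  · rw [SimpleGraph.dist_eq_one_iff_adj.mpr h]; omega
  · exact le_trans (SimpleGraph.dist_le (Walk.cons h1 (Walk.cons h2 Walk.nil))) (by simp)

lemma star_adj_iff (n : ℕ) (a b : Fin (n + 1)) :
    (starGraph n).Adj a b ↔ a ≠ b ∧ (a = 0 ∨ b = 0) :=
  SimpleGraph.fromRel_adj _ a b

lemma star_adj_zero {n : ℕ} {b : Fin (n + 1)} (h : b ≠ 0) : (starGraph n).Adj 0 b :=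
  (star_adj_iff n 0 b).mpr ⟨Ne.symm h, Or.inl rfl⟩

lemma star_preconnected (n : ℕ) : (starGraph n).Preconnected := by
  intro a b
  have h1 : (starGraph n).Reachable a 0 := by
    by_cases ha : a = 0
    · exact ha ▸ Reachable.refl _
    · exact ((star_adj_zero ha).symm).reachable
  have h2 : (starGraph n).Reachable 0 b := by
    by_cases hb : b = 0
    · exact hb ▸ Reachable.refl _
    · exact (star_adj_zero hb).reachable
  exact h1.trans h2

lemma star_connected (n : ℕ) : (starGraph n).Connected := ⟨star_preconnected n⟩

lemma star_dist_zero_le (n : ℕ) (b : Fin (n + 1)) : (starGraph n).dist 0 b ≤ 1 := by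
  by_cases hb : b = 0
  · simp [hb, SimpleGraph.dist_self]
  · rw [SimpleGraph.dist_eq_one_iff_adj.mpr (star_adj_zero hb)]

lemma star_dist_le_two (n : ℕ) (a b : Fin (n + 1)) : (starGraph n).dist a b ≤ 2 := by
  calc (starGraph n).dist a b ≤ (starGraph n).dist a 0 + (starGraph n).dist 0 b :=
        (star_connected n).dist_triangle
    _ ≤ 1 + 1 := by
        have := star_dist_zero_le n a
        rw [SimpleGraph.dist_comm] at this
        exact add_le_add this (star_dist_zero_le n b)

lemma boxProd_dist_le {α β : Type*} {G : SimpleGraph α} {H : SimpleGraph β}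
    (hG : G.Preconnected) (hH : H.Preconnected) (a c : α) (b d : β) :
    (G.boxProd H).dist (a, b) (c, d) ≤ G.dist a c + H.dist b d := by
  obtain ⟨w1, hw1⟩ := (hG a c).exists_walk_length_eq_dist
  obtain ⟨w2, hw2⟩ := (hH b d).exists_walk_length_eq_dist
  have h := SimpleGraph.dist_le ((w1.boxProdLeft H b).append (w2.boxProdRight G c))
  have e1 : (w1.boxProdLeft H b).length = w1.length := Walk.length_map _ _
  have e2 : (w2.boxProdRight G c).length = w2.length := Walk.length_map _ _
  rwa [Walk.length_append, e1, e2, hw1, hw2] at h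

lemma boxProd_walk_dist_le {α β : Type*} {G : SimpleGraph α} {H : SimpleGraph β}
    (hG : G.Connected) (hH : H.Connected) :
    ∀ {x y : α × β} (w : (G.boxProd H).Walk x y),
      G.dist x.1 y.1 + H.dist x.2 y.2 ≤ w.length := by
  intro x y w
  induction w with
  | nil => simp
  | @cons u v z h p ih =>
    rcases (SimpleGraph.boxProd_adj.mp h) with ⟨hA, hB⟩ | ⟨hA, hB⟩
    · have h1 : G.dist u.1 z.1 ≤ G.dist u.1 v.1 + G.dist v.1 z.1 := hG.dist_triangle
      have h2 : G.dist u.1 v.1 ≤ 1 := le_of_eq (SimpleGraph.dist_eq_one_iff_adj.mpr hA)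
      have h3 : H.dist u.2 z.2 = H.dist v.2 z.2 := by rw [hB]
      simp only [Walk.length_cons]
      omega
    · have h1 : H.dist u.2 z.2 ≤ H.dist u.2 v.2 + H.dist v.2 z.2 := hH.dist_triangle
      have h2 : H.dist u.2 v.2 ≤ 1 := le_of_eq (SimpleGraph.dist_eq_one_iff_adj.mpr hA)
      have h3 : G.dist u.1 z.1 = G.dist v.1 z.1 := by rw [hB]
      simp only [Walk.length_cons]
      omega

lemma boxProd_dist_ge {α β : Type*} {G : SimpleGraph α} {H : SimpleGraph β}
    (hG : G.Connected) (hH : H.Connected) (x y : α × β) :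
    G.dist x.1 y.1 + H.dist x.2 y.2 ≤ (G.boxProd H).dist x y := by
  obtain ⟨w, hw⟩ := ((hG.boxProd hH).preconnected x y).exists_walk_length_eq_dist
  exact hw ▸ boxProd_walk_dist_le hG hH w

lemma two_le_dist_of {α : Type*} {G : SimpleGraph α} (hc : G.Connected) {a b : α}
    (hne : a ≠ b) (hadj : ¬ G.Adj a b) : 2 ≤ G.dist a b := by
  have h1 : G.dist a b ≠ 0 := by rw [ne_eq, hc.dist_eq_zero_iff]; exact hne
  have h2 : G.dist a b ≠ 1 := fun h => hadj (SimpleGraph.dist_eq_one_iff_adj.mp h)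
  omega


lemma graphDiam_box (n : ℕ) (hn : 3 ≤ n) :
    graphDiam ((genPetersen 5 2).boxProd (starGraph n)) = 4 := by
  have hdle : ∀ x y : (Bool × ZMod 5) × Fin (n + 1),
      ((genPetersen 5 2).boxProd (starGraph n)).dist x y ≤ 4 := by
    intro x y
    calc ((genPetersen 5 2).boxProd (starGraph n)).dist x y
        ≤ (genPetersen 5 2).dist x.1 y.1 + (starGraph n).dist x.2 y.2 :=
          boxProd_dist_le petersen_preconnected (star_preconnected n) x.1 y.1 x.2 y.2
      _ ≤ 2 + 2 := add_le_add (petersen_dist_le_two _ _) (star_dist_le_two n _ _)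
  apply le_antisymm
  · exact Finset.sup_le fun p _ => hdle p.1 p.2
  · -- exhibit a pair at distance ≥ 4
    set l1 : Fin (n + 1) := ⟨1, by omega⟩
    set l2 : Fin (n + 1) := ⟨2, by omega⟩
    have hl1 : l1 ≠ 0 := by simp [l1, Fin.ext_iff]
    have hl2 : l2 ≠ 0 := by simp [l2, Fin.ext_iff]
    have hl12 : l1 ≠ l2 := by simp [l1, l2, Fin.ext_iff]
    have hSd : 2 ≤ (starGraph n).dist l1 l2 := by
      refine two_le_dist_of (star_connected n) hl12 ?_
      rw [star_adj_iff]
      tauto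
    have hPd : 2 ≤ (genPetersen 5 2).dist (false, 0) (false, 2) := by
      refine two_le_dist_of petersen_connected ?_ ?_ <;> decide
    have h4 : 4 ≤ ((genPetersen 5 2).boxProd (starGraph n)).dist
        ((false, (0 : ZMod 5)), l1) ((false, (2 : ZMod 5)), l2) := by
      have h := boxProd_dist_ge petersen_connected (star_connected n)
        ((false, (0 : ZMod 5)), l1) ((false, (2 : ZMod 5)), l2)
      dsimp only at h
      omega
    calc (4 : ℕ) ≤ _ := h4
      _ ≤ graphDiam ((genPetersen 5 2).boxProd (starGraph n)) :=
          Finset.le_sup (f := fun p : ((Bool × ZMod 5) × Fin (n+1)) × _ =>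
            ((genPetersen 5 2).boxProd (starGraph n)).dist p.1 p.2)
            (Finset.mem_univ ((((false, (0:ZMod 5)), l1)), (((false, (2:ZMod 5)), l2))))

end LowerBoundHelpers

/-- Every radio labeling of `P_{5,2} □ K_{1,n}` (`n ≥ 3`) has span at least `10n + 27`;
in particular `rn(P_{5,2} □ K_{1,n}) ≥ 10n + 27`. -/
theorem radioNumber_petersen_boxProd_star_lower_bound (n : ℕ) (hn : 3 ≤ n) :
    (∀ f : (Bool × ZMod 5) × Fin (n + 1) → ℕ,
      IsRadioLabeling ((genPetersen 5 2).boxProd (starGraph n)) f →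
        10 * n + 27 ≤ radioSpan f) ∧
    10 * n + 27 ≤ radioNumber ((genPetersen 5 2).boxProd (starGraph n)) := by
  classical
  have hconn : ((genPetersen 5 2).boxProd (starGraph n)).Connected :=
    petersen_connected.boxProd (star_connected n)
  have hdiam : graphDiam ((genPetersen 5 2).boxProd (starGraph n)) = 4 := graphDiam_box n hn
  have hdle : ∀ x y : (Bool × ZMod 5) × Fin (n + 1),
      ((genPetersen 5 2).boxProd (starGraph n)).dist x y ≤
        2 + (starGraph n).dist x.2 y.2 := by
    intro x y
    calc ((genPetersen 5 2).boxProd (starGraph n)).dist x y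
        ≤ (genPetersen 5 2).dist x.1 y.1 + (starGraph n).dist x.2 y.2 :=
          boxProd_dist_le petersen_preconnected (star_preconnected n) x.1 y.1 x.2 y.2
      _ ≤ 2 + (starGraph n).dist x.2 y.2 :=
          add_le_add_left (petersen_dist_le_two _ _) _
  have hd4 : ∀ x y : (Bool × ZMod 5) × Fin (n + 1),
      ((genPetersen 5 2).boxProd (starGraph n)).dist x y ≤ 4 := by
    intro x y
    have := hdle x y
    have := star_dist_le_two n x.2 y.2
    omega
  have main : ∀ f : (Bool × ZMod 5) × Fin (n + 1) → ℕ,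
      IsRadioLabeling ((genPetersen 5 2).boxProd (starGraph n)) f →
        10 * n + 27 ≤ radioSpan f := by
    intro f hf
    have hinj : Function.Injective f := by
      intro u v huv
      by_contra hne
      have h := hf u v hne
      rw [huv, sub_self, abs_zero, hdiam] at h
      have := hd4 u v
      push_cast at h
      omega
    set N := 10 * (n + 1) with hN
    have hNpos : 0 < N := by omega
    have hcard : Fintype.card ((Bool × ZMod 5) × Fin (n + 1)) = N := by
      simp [hN]
    letI : LinearOrder ((Bool × ZMod 5) × Fin (n + 1)) := LinearOrder.lift' f hinj
    let e := monoEquivOfFin ((Bool × ZMod 5) × Fin (n + 1)) hcard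
    let g : ℕ → (Bool × ZMod 5) × Fin (n + 1) := fun i => e ⟨i % N, Nat.mod_lt _ hNpos⟩
    have hgeq : ∀ i (h : i < N), g i = e ⟨i, h⟩ := by
      intro i h
      simp only [g]
      exact congrArg e (Fin.ext (by simp [Nat.mod_eq_of_lt h]))
    let c : ℕ → ℤ := fun i => if (g i).2 = 0 then 1 else 0
    have hstep : ∀ i, i < N - 1 →
        1 + c i + c (i + 1) ≤ (f (g (i + 1)) : ℤ) - f (g i) := by
      intro i hi
      have hiN : i < N := by omega
      have hi1N : i + 1 < N := by omega
      have hne : g i ≠ g (i + 1) := by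
        rw [hgeq i hiN, hgeq (i + 1) hi1N]
        intro h
        have := e.injective h
        simp [Fin.ext_iff] at this
      have hlt : f (g i) < f (g (i + 1)) := by
        have : e ⟨i, hiN⟩ < e ⟨i + 1, hi1N⟩ := e.strictMono (by simp [Fin.lt_def])
        rw [hgeq i hiN, hgeq (i + 1) hi1N]
        exact this
      have hrad := hf (g i) (g (i + 1)) hne
      rw [hdiam] at hrad
      have habs : |(f (g i) : ℤ) - f (g (i + 1))| = (f (g (i + 1)) : ℤ) - f (g i) := by
        have hlt' : (f (g i) : ℤ) < f (g (i + 1)) := by exact_mod_cast hlt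
        rw [abs_sub_comm]
        exact abs_of_pos (by omega)
      rw [habs] at hrad
      have hbox := hdle (g i) (g (i + 1))
      have hSbound : ((starGraph n).dist (g i).2 (g (i + 1)).2 : ℤ) ≤ 2 - c i - c (i + 1) := by
        simp only [c]
        by_cases h1 : (g i).2 = 0 <;> by_cases h2 : (g (i + 1)).2 = 0
        · rw [if_pos h1, if_pos h2, h1, h2, SimpleGraph.dist_self]; norm_num
        · rw [if_pos h1, if_neg h2, h1]
          have := star_dist_zero_le n (g (i + 1)).2
          omega
        · rw [if_neg h1, if_pos h2, h2]
          have := star_dist_zero_le n (g i).2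
          rw [SimpleGraph.dist_comm] at this
          omega
        · rw [if_neg h1, if_neg h2]
          have := star_dist_le_two n (g i).2 (g (i + 1)).2
          omega
      have hSnat : ((genPetersen 5 2).boxProd (starGraph n)).dist (g i) (g (i + 1)) ≤
          2 + (starGraph n).dist (g i).2 (g (i + 1)).2 := hbox
      push_cast at hrad ⊢
      have : (((genPetersen 5 2).boxProd (starGraph n)).dist (g i) (g (i + 1)) : ℤ) ≤
          2 + ((starGraph n).dist (g i).2 (g (i + 1)).2 : ℤ) := by exact_mod_cast hSnat
      omega
    have hc0 : ∀ i, 0 ≤ c i := by intro i; simp only [c]; split <;> norm_num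
    have hc1 : ∀ i, c i ≤ 1 := by intro i; simp only [c]; split <;> norm_num
    have hZ : ∑ i ∈ Finset.range N, c i = 10 := by
      rw [← Fin.sum_univ_eq_sum_range]
      have he : ∀ j : Fin N, c j.val = if (e j).2 = 0 then (1 : ℤ) else 0 := by
        intro j
        simp only [c]
        rw [hgeq j.val j.isLt]
      calc ∑ j : Fin N, c j.val = ∑ j : Fin N, (if (e j).2 = 0 then (1 : ℤ) else 0) := by
            exact Finset.sum_congr rfl fun j _ => he j
        _ = ∑ v : (Bool × ZMod 5) × Fin (n + 1), (if v.2 = 0 then (1 : ℤ) else 0) :=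
            Fintype.sum_equiv e.toEquiv _ _ (fun j => rfl)
        _ = 10 := by
            rw [Fintype.sum_prod_type]
            simp [Finset.sum_ite_eq']
    have htel : (f (g (N - 1)) : ℤ) - f (g 0) =
        ∑ i ∈ Finset.range (N - 1), ((f (g (i + 1)) : ℤ) - f (g i)) := by
      rw [Finset.sum_range_sub (fun i => (f (g i) : ℤ))]
    have hsum : ∑ i ∈ Finset.range (N - 1), (1 + c i + c (i + 1)) ≤
        ∑ i ∈ Finset.range (N - 1), ((f (g (i + 1)) : ℤ) - f (g i)) :=
      Finset.sum_le_sum fun i hi => hstep i (Finset.mem_range.mp hi)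
    have hsplit : ∑ i ∈ Finset.range (N - 1), (1 + c i + c (i + 1)) =
        (N - 1 : ℕ) + (∑ i ∈ Finset.range (N - 1), c i) +
          (∑ i ∈ Finset.range (N - 1), c (i + 1)) := by
      rw [Finset.sum_add_distrib, Finset.sum_add_distrib, Finset.sum_const, Finset.card_range]
      push_cast
      ring
    have hNsucc : N - 1 + 1 = N := by omega
    have hA : ∑ i ∈ Finset.range (N - 1), c i = 10 - c (N - 1) := by
      have := Finset.sum_range_succ c (N - 1)
      rw [hNsucc] at this
      omega
    have hB : ∑ i ∈ Finset.range (N - 1), c (i + 1) = 10 - c 0 := by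
      have := Finset.sum_range_succ' c (N - 1)
      rw [hNsucc] at this
      omega
    have hfinal : (10 * n + 27 : ℤ) ≤ (f (g (N - 1)) : ℤ) - f (g 0) := by
      rw [htel] at *
      have h1 := hc1 0
      have h2 := hc1 (N - 1)
      have hN1 : ((N - 1 : ℕ) : ℤ) = 10 * n + 9 := by push_cast; omega
      calc (10 * n + 27 : ℤ) = (10 * n + 9) + (10 - 1) + (10 - 1) := by ring
        _ ≤ (N - 1 : ℕ) + (10 - c (N - 1)) + (10 - c 0) := by rw [hN1]; omega
        _ = ∑ i ∈ Finset.range (N - 1), (1 + c i + c (i + 1)) := by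
            rw [hsplit, hA, hB]
        _ ≤ _ := hsum
    have hspan : f (g (N - 1)) - f (g 0) ≤ radioSpan f :=
      Finset.le_sup (f := fun p : ((Bool × ZMod 5) × Fin (n + 1)) ×
        ((Bool × ZMod 5) × Fin (n + 1)) => f p.1 - f p.2)
        (Finset.mem_univ (g (N - 1), g 0))
    omega
  refine ⟨main, ?_⟩
  -- construct one radio labeling to show the set is nonempty
  let f0 : (Bool × ZMod 5) × Fin (n + 1) → ℕ :=
    fun v => 5 * (Fintype.equivFin ((Bool × ZMod 5) × Fin (n + 1)) v)
  have hlab : IsRadioLabeling ((genPetersen 5 2).boxProd (starGraph n)) f0 := by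
    intro u v huv
    have hne : (Fintype.equivFin ((Bool × ZMod 5) × Fin (n + 1)) u : ℕ) ≠
        (Fintype.equivFin ((Bool × ZMod 5) × Fin (n + 1)) v : ℕ) := by
      intro h
      exact huv ((Fintype.equivFin _).injective (Fin.ext h))
    have h5 : (5 : ℤ) ≤ |(f0 u : ℤ) - f0 v| := by
      simp only [f0]
      push_cast
      rw [← mul_sub, abs_mul]
      have : (1 : ℤ) ≤ |(Fintype.equivFin ((Bool × ZMod 5) × Fin (n + 1)) u : ℤ) -
          (Fintype.equivFin ((Bool × ZMod 5) × Fin (n + 1)) v : ℤ)| := by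
        refine Int.one_le_abs (sub_ne_zero.mpr ?_)
        exact_mod_cast hne
      calc (5 : ℤ) = 5 * 1 := by ring
        _ ≤ |(5 : ℤ)| * _ := by rw [abs_of_nonneg (by norm_num : (0:ℤ) ≤ 5)];
                                 exact mul_le_mul_of_nonneg_left this (by norm_num)
    rw [hdiam]
    have : (0 : ℤ) ≤ ((genPetersen 5 2).boxProd (starGraph n)).dist u v := by positivity
    push_cast
    omega
  exact le_csInf ⟨radioSpan f0, f0, hlab, rfl⟩
    (by rintro s ⟨f, hf, rfl⟩; exact main f hf)

end RadioPaper
end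

section
/- Let P_{m,k} be a generalized Petersen graph (m ≥ 3, k ≥ 1) of order 2m, T a tree of order n, and G = P_{m,k} □ T; let d_p = diam(P_{m,k}) and ε = ε(T). For any ordering z_0, z_1, …, z_{2mn−1} of all vertices of G, with z_t = (x_{i_t}, y_{j_t}), the total consecutive distance satisfies ∑_{t=0}^{2mn−2} d_G(z_t, z_{t+1}) ≤ (2mn − 1)(d_p + 1 − ε) + 4m·L(T). -/
/-!
Common definitions: radio labelings, weight centers, levels, branches,
generalized Petersen graphs, stars.
-/

open Finset

namespace RadioPaper

variable {V : Type*}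

open SimpleGraph Finset
namespace RadioAux
variable {V : Type*} {G : SimpleGraph V}

lemma dist_split (hc : G.Connected) {u v y : V} (p : G.Walk u v)
    (hp : p.length = G.dist u v) (hy : y ∈ p.support) :
    G.dist u y + G.dist y v = G.dist u v := by
  classical
  have h1 : G.dist u y ≤ (p.takeUntil y hy).length := SimpleGraph.dist_le _
  have h2 : G.dist y v ≤ (p.dropUntil y hy).length := SimpleGraph.dist_le _
  have h3 : (p.takeUntil y hy).length + (p.dropUntil y hy).length = p.length := by
    have h := congrArg SimpleGraph.Walk.length (p.take_spec hy)
    rwa [SimpleGraph.Walk.length_append] at h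
  have h4 : G.dist u v ≤ G.dist u y + G.dist y v := hc.dist_triangle
  omega

lemma dist_le_succ_of_adj (hc : G.Connected) {a b : V} (hab : G.Adj a b) (v : V) :
    G.dist v a ≤ G.dist v b + 1 := by
  have h1 : G.dist b a = 1 := by rw [SimpleGraph.dist_comm]; exact dist_eq_one_iff_adj.mpr hab
  have := hc.dist_triangle (u := v) (v := b) (w := a)
  omega

lemma dist_ne_of_adj (hT : G.IsTree) {a b : V} (hab : G.Adj a b) (v : V) :
    G.dist v a ≠ G.dist v b := by
  intro h
  have hc := hT.isConnected
  obtain ⟨p, hpath, hlen⟩ := (hc v a).exists_path_of_dist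
  by_cases hb : b ∈ p.support
  · have hsplit := dist_split hc p hlen hb
    have hba : G.dist b a = 1 := by rw [SimpleGraph.dist_comm]; exact dist_eq_one_iff_adj.mpr hab
    have h0 : G.dist v a = 0 ∨ 1 ≤ G.dist v a := by omega
    omega
  · have hq : (p.concat hab).IsPath := by
      rw [← SimpleGraph.Walk.isPath_reverse_iff, SimpleGraph.Walk.reverse_concat,
        SimpleGraph.Walk.cons_isPath_iff]
      refine ⟨hpath.reverse, ?_⟩
      rw [SimpleGraph.Walk.support_reverse]
      simpa using hb
    obtain ⟨p', hpath', hlen'⟩ := (hc v b).exists_path_of_dist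
    have := (hT.existsUnique_path v b).unique hq hpath'
    have hlenq : (p.concat hab).length = G.dist v a + 1 := by
      rw [SimpleGraph.Walk.length_concat, hlen]
    rw [this] at hlenq
    omega

/-- the only "s-flipping" edge is (w,p1) itself -/
lemma edge_flip (hT : G.IsTree) {w p1 u u' : V} (hwp : G.Adj w p1) (huu : G.Adj u u')
    (hu : G.dist u p1 = G.dist u w + 1) (hu' : G.dist u' w = G.dist u' p1 + 1) :
    u = w ∧ u' = p1 := by
  have hc := hT.isConnected
  set t := G.dist u w with ht
  have huu1 : G.dist u u' = 1 := dist_eq_one_iff_adj.mpr huu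
  have hb' : G.dist u' p1 = t := by
    have h1 : G.dist u p1 ≤ G.dist u u' + G.dist u' p1 := hc.dist_triangle
    have h2 : G.dist u' w ≤ G.dist u' u + G.dist u w := hc.dist_triangle
    have h3 : G.dist u' u = 1 := by rw [SimpleGraph.dist_comm]; exact huu1
    omega
  have ha' : G.dist u' w = t + 1 := by omega
  rcases Nat.eq_zero_or_pos t with h0 | hpos
  · have huw : u = w := (hc.dist_eq_zero_iff).mp (by omega)
    have hup : u' = p1 := (hc.dist_eq_zero_iff).mp (by omega)
    exact ⟨huw, hup⟩
  · exfalso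
    obtain ⟨P, hPpath, hPlen⟩ := (hc u w).exists_path_of_dist
    obtain ⟨Q, hQpath, hQlen⟩ := (hc u' p1).exists_path_of_dist
    have hu'P : u' ∉ P.support := by
      intro hmem
      have := dist_split hc P hPlen hmem
      omega
    have hwQ : w ∉ Q.support := by
      intro hmem
      have := dist_split hc Q hQlen hmem
      have hwp1 : G.dist w p1 = 1 := dist_eq_one_iff_adj.mpr hwp
      omega
    have hW1 : (SimpleGraph.Walk.cons huu.symm P).IsPath := by
      rw [SimpleGraph.Walk.cons_isPath_iff]
      exact ⟨hPpath, hu'P⟩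
    have hW2 : (Q.concat hwp.symm).IsPath := by
      rw [← SimpleGraph.Walk.isPath_reverse_iff, SimpleGraph.Walk.reverse_concat,
        SimpleGraph.Walk.cons_isPath_iff]
      refine ⟨hQpath.reverse, ?_⟩
      rw [SimpleGraph.Walk.support_reverse]
      simpa using hwQ
    have heq := (hT.existsUnique_path u' w).unique hW2 hW1
    have hp1mem : p1 ∈ (Q.concat hwp.symm).support := by
      rw [SimpleGraph.Walk.support_concat]
      simp [List.concat_eq_append]
    rw [heq] at hp1mem
    rw [SimpleGraph.Walk.support_cons] at hp1mem
    rcases List.mem_cons.mp hp1mem with h | h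
    · rw [← h] at hb'
      simp [SimpleGraph.dist_self] at hb'
      omega
    · have := dist_split hc P hPlen h
      have hp1w : G.dist p1 w = 1 := by
        rw [SimpleGraph.dist_comm]; exact dist_eq_one_iff_adj.mpr hwp
      omega

end RadioAux

namespace RadioAux
variable {V : Type*} {G : SimpleGraph V}

/-- separation lemma: vertices on the `w`-side of edge `w-p1` reach `x` on the
`p1`-side through the edge -/
lemma dist_separation (hT : G.IsTree) {w p1 x : V} (hwp : G.Adj w p1)
    (hx : G.dist x w = G.dist x p1 + 1) :
    ∀ N v, G.dist v x = N → G.dist v p1 = G.dist v w + 1 →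
      G.dist v x = G.dist v w + 1 + G.dist p1 x := by
  have hc := hT.isConnected
  have hxw : G.dist p1 x + 1 = G.dist w x := by
    rw [SimpleGraph.dist_comm (u := p1), SimpleGraph.dist_comm (u := w)]; omega
  intro N
  induction N using Nat.strong_induction_on with
  | _ N IH =>
    intro v hN hv
    rcases Nat.eq_zero_or_pos N with h0 | hpos
    · exfalso
      have hvx : v = x := (hc.dist_eq_zero_iff).mp (by omega)
      rw [hvx] at hv
      omega
    · obtain ⟨p, hplen⟩ := (hc v x).exists_walk_length_eq_dist
      cases p with
      | nil => rw [SimpleGraph.Walk.length_nil] at hplen; omega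
      | @cons _ v₁ _ h q =>
        rw [SimpleGraph.Walk.length_cons] at hplen
        have hq : G.dist v₁ x = N - 1 := by
          have h1 : G.dist v₁ x ≤ q.length := SimpleGraph.dist_le q
          have h2 : G.dist v x ≤ G.dist v v₁ + G.dist v₁ x := hc.dist_triangle
          have h3 : G.dist v v₁ = 1 := dist_eq_one_iff_adj.mpr h
          omega
        have htri : G.dist v x ≤ G.dist v w + 1 + G.dist p1 x := by
          have h1 : G.dist v x ≤ G.dist v w + G.dist w x := hc.dist_triangle
          omega
        have h1 := dist_le_succ_of_adj hc hwp v₁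
        have h2 := dist_le_succ_of_adj hc hwp.symm v₁
        have h3 := dist_ne_of_adj hT hwp v₁
        rcases (by omega : G.dist v₁ p1 = G.dist v₁ w + 1 ∨
            G.dist v₁ w = G.dist v₁ p1 + 1) with hcase | hcase
        · have hIH := IH (N - 1) (by omega) v₁ hq hcase
          have h4 : G.dist v w ≤ G.dist v v₁ + G.dist v₁ w := hc.dist_triangle
          have h5 : G.dist v v₁ = 1 := dist_eq_one_iff_adj.mpr h
          omega
        · obtain ⟨hvw, hv1p⟩ := edge_flip hT hwp h hv hcase
          rw [hvw] at hN ⊢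
          rw [SimpleGraph.dist_self]
          omega

/-- any two weight centers of a tree are at distance at most 1 -/
lemma centers_dist_le_one [Fintype V] (hT : G.IsTree) {w w' : V}
    (hw : ∀ u : V, (∑ v : V, G.dist w v) ≤ ∑ v : V, G.dist u v)
    (hw' : ∀ u : V, (∑ v : V, G.dist w' v) ≤ ∑ v : V, G.dist u v) :
    G.dist w w' ≤ 1 := by
  by_contra hcon
  push_neg at hcon
  have hc := hT.isConnected
  set d := G.dist w w' with hd
  obtain ⟨p, hplen⟩ := (hc w w').exists_walk_length_eq_dist
  cases p with
  | nil =>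
    rw [SimpleGraph.Walk.length_nil] at hplen; omega
  | @cons _ p1 _ h q =>
    rw [SimpleGraph.Walk.length_cons] at hplen
    have hq : G.dist p1 w' = d - 1 := by
      have h1 : G.dist p1 w' ≤ q.length := SimpleGraph.dist_le q
      have h2 : G.dist w w' ≤ G.dist w p1 + G.dist p1 w' := hc.dist_triangle
      have h3 : G.dist w p1 = 1 := dist_eq_one_iff_adj.mpr h
      omega
    have hp1w : G.dist p1 w = 1 := by
      rw [SimpleGraph.dist_comm]; exact dist_eq_one_iff_adj.mpr h
    have hx : G.dist w' w = G.dist w' p1 + 1 := by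
      rw [SimpleGraph.dist_comm (u := w'), SimpleGraph.dist_comm (u := w')]
      omega
    -- pointwise nonnegative function
    set g : V → ℤ := fun v => ((G.dist v w' : ℤ) - G.dist v w)
      - d * ((G.dist v p1 : ℤ) - G.dist v w) with hg
    have hgnn : ∀ v : V, 0 ≤ g v := by
      intro v
      have h1 := dist_le_succ_of_adj hc h v
      have h2 := dist_le_succ_of_adj hc h.symm v
      have h3 := dist_ne_of_adj hT h v
      rcases (by omega : G.dist v p1 = G.dist v w + 1 ∨
          G.dist v w = G.dist v p1 + 1) with hcase | hcase
      · have hsep := dist_separation hT h hx (G.dist v w') v rfl hcase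
        have hsep' : G.dist v w' = G.dist v w + d := by omega
        have hzero : g v = 0 := by
          simp only [hg]
          rw [hsep', hcase]
          push_cast
          ring
        omega
      · have htri : G.dist v w ≤ G.dist v w' + d := by
          have h1 : G.dist v w ≤ G.dist v w' + G.dist w' w := hc.dist_triangle
          rw [SimpleGraph.dist_comm (u := w')] at h1
          omega
        simp only [hg, hcase]
        push_cast
        have : (G.dist v p1 : ℤ) + 1 - G.dist v p1 = 1 := by ring
        nlinarith [Int.ofNat_nonneg (G.dist v w'), (by exact_mod_cast htri :
          (G.dist v w : ℤ) ≤ (G.dist v w' : ℤ) + d)]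
    have hgp1 : g p1 = 2 * d - 2 := by
      have hd1 : 1 ≤ d := by omega
      simp only [hg, hq, hp1w, SimpleGraph.dist_self]
      push_cast [Nat.cast_sub hd1]
      ring
    -- sum of g
    have hsum1 : (∑ v : V, ((G.dist v w' : ℤ) - G.dist v w)) = 0 := by
      have e1 : (∑ v : V, G.dist w' v) = ∑ v : V, G.dist w v :=
        le_antisymm (hw' w) (hw w')
      have e2 : ∀ u : V, (∑ v : V, ((G.dist v u : ℤ))) = ((∑ v : V, G.dist u v : ℕ) : ℤ) := by
        intro u
        push_cast
        exact Finset.sum_congr rfl fun v _ => by rw [SimpleGraph.dist_comm]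
      rw [Finset.sum_sub_distrib, e2 w', e2 w, e1]
      ring
    have hsum2 : 0 ≤ (∑ v : V, ((G.dist v p1 : ℤ) - G.dist v w)) := by
      have e1 : (∑ v : V, G.dist w v) ≤ ∑ v : V, G.dist p1 v := hw p1
      have e2 : ∀ u : V, (∑ v : V, ((G.dist v u : ℤ))) = ((∑ v : V, G.dist u v : ℕ) : ℤ) := by
        intro u
        push_cast
        exact Finset.sum_congr rfl fun v _ => by rw [SimpleGraph.dist_comm]
      rw [Finset.sum_sub_distrib, e2 p1, e2 w]
      have := Nat.cast_le (α := ℤ) |>.mpr e1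
      omega
    have hsumg : (∑ v : V, g v) = - (d * ∑ v : V, ((G.dist v p1 : ℤ) - G.dist v w)) := by
      simp only [hg]
      rw [Finset.sum_sub_distrib, hsum1, ← Finset.mul_sum]
      ring
    have hle : g p1 ≤ ∑ v : V, g v :=
      Finset.single_le_sum (fun v _ => hgnn v) (Finset.mem_univ p1)
    have hdn : (0:ℤ) ≤ (d:ℤ) := Int.ofNat_nonneg d
    rw [hsumg, hgp1] at hle
    have h2d : (2:ℤ) ≤ (d:ℤ) := by exact_mod_cast hcon
    nlinarith [hsum2]

end RadioAux

namespace RadioAux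
variable {Vt : Type*}

open RadioPaper in
/-- distance bound via levels in a tree -/
lemma tree_dist_bound [Fintype Vt] (T : SimpleGraph Vt) (hT : T.IsTree) (y y' : Vt) :
    (T.dist y y' : ℤ) ≤ level T y + level T y' + 1 - eps T := by
  have hVt : Nonempty Vt := hT.isConnected.nonempty
  obtain ⟨c, -, hc⟩ := Finset.exists_min_image Finset.univ (weight T) Finset.univ_nonempty
  have hcW : c ∈ weightCenters T := fun u => hc u (Finset.mem_univ u)
  by_cases h1 : (weightCenters T).ncard = 1
  · obtain ⟨a, ha⟩ := Set.ncard_eq_one.mp h1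
    have hlev : ∀ z : Vt, level T z = T.dist z a := by
      intro z
      have hset : {d | ∃ w ∈ weightCenters T, T.dist z w = d} = {T.dist z a} := by
        rw [ha]; ext d; simp [eq_comm]
      rw [level, hset, csInf_singleton]
    rw [eps, if_pos h1, hlev y, hlev y']
    have tri : T.dist y y' ≤ T.dist y a + T.dist a y' := hT.isConnected.dist_triangle
    have hcm : T.dist a y' = T.dist y' a := SimpleGraph.dist_comm
    push_cast
    omega
  · rw [eps, if_neg h1]
    have hney : ({d | ∃ w ∈ weightCenters T, T.dist y w = d}).Nonempty :=
      ⟨T.dist y c, c, hcW, rfl⟩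
    have hney' : ({d | ∃ w ∈ weightCenters T, T.dist y' w = d}).Nonempty :=
      ⟨T.dist y' c, c, hcW, rfl⟩
    obtain ⟨w, hwW, hwd⟩ := Nat.sInf_mem hney
    obtain ⟨w', hwW', hwd'⟩ := Nat.sInf_mem hney'
    have hww' : T.dist w w' ≤ 1 := by
      refine centers_dist_le_one hT (fun u => ?_) (fun u => ?_)
      · exact hwW u
      · exact hwW' u
    have tri1 : T.dist y y' ≤ T.dist y w' + T.dist w' y' := hT.isConnected.dist_triangle
    have tri2 : T.dist y w' ≤ T.dist y w + T.dist w w' := hT.isConnected.dist_triangle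
    have hcm : T.dist w' y' = T.dist y' w' := SimpleGraph.dist_comm
    have e1 : level T y = T.dist y w := hwd.symm
    have e2 : level T y' = T.dist y' w' := hwd'.symm
    rw [e1, e2]
    push_cast
    omega

open RadioPaper in
lemma genPetersen_connected (m k : ℕ) [NeZero m] (hm : 3 ≤ m) :
    (genPetersen m k).Connected := by
  haveI : Fact (1 < m) := ⟨by omega⟩
  have hadj_outer : ∀ i : ZMod m, (genPetersen m k).Adj (false, i) (false, i + 1) := by
    intro i
    rw [genPetersen, SimpleGraph.fromRel_adj]
    constructor
    · intro hcon
      have h2 := congrArg Prod.snd hcon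
      simp only at h2
      exact one_ne_zero (α := ZMod m) (left_eq_add.mp h2)
    · exact Or.inl (Or.inl ⟨rfl, rfl, rfl⟩)
  have hadj_spoke : ∀ i : ZMod m, (genPetersen m k).Adj (false, i) (true, i) := by
    intro i
    rw [genPetersen, SimpleGraph.fromRel_adj]
    refine ⟨by simp, Or.inl (Or.inr (Or.inl ⟨rfl, rfl, rfl⟩))⟩
  have houter : ∀ j : ℕ, (genPetersen m k).Reachable (false, (0 : ZMod m)) (false, (j : ZMod m)) := by
    intro j
    induction j with
    | zero => simpa using SimpleGraph.Reachable.refl (false, (0 : ZMod m))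
    | succ j ih =>
      have hcast : ((j + 1 : ℕ) : ZMod m) = (j : ZMod m) + 1 := by push_cast; ring
      rw [hcast]
      exact ih.trans (hadj_outer (j : ZMod m)).reachable
  have hall : ∀ x : Bool × ZMod m, (genPetersen m k).Reachable (false, (0 : ZMod m)) x := by
    rintro ⟨b, i⟩
    have hi : ((i.val : ℕ) : ZMod m) = i := ZMod.natCast_rightInverse i
    have h1 : (genPetersen m k).Reachable (false, (0 : ZMod m)) (false, i) := by
      rw [← hi]; exact houter i.val
    cases b
    · exact h1
    · exact h1.trans (hadj_spoke i).reachable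
  haveI : Nonempty (Bool × ZMod m) := ⟨(false, (0 : ZMod m))⟩
  exact SimpleGraph.Connected.mk (fun x y => (hall x).symm.trans (hall y))

lemma boxProd_dist_le {α β : Type*} {G : SimpleGraph α} {H : SimpleGraph β}
    (hG : G.Connected) (hH : H.Connected) (z z' : α × β) :
    (G.boxProd H).dist z z' ≤ G.dist z.1 z'.1 + H.dist z.2 z'.2 := by
  obtain ⟨a, b⟩ := z
  obtain ⟨a', b'⟩ := z'
  obtain ⟨p, hp⟩ := (hG a a').exists_walk_length_eq_dist
  obtain ⟨q, hq⟩ := (hH b b').exists_walk_length_eq_dist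
  have hle := SimpleGraph.dist_le ((p.boxProdLeft H b).append (q.boxProdRight G a'))
  rw [SimpleGraph.Walk.length_append] at hle
  have l1 : (p.boxProdLeft H b).length = p.length := by
    simp [SimpleGraph.Walk.boxProdLeft]
    exact SimpleGraph.Walk.length_map _ _
  have l2 : (q.boxProdRight G a').length = q.length := by
    simp [SimpleGraph.Walk.boxProdRight]
    exact SimpleGraph.Walk.length_map _ _
  rw [l1, l2, hp, hq] at hle
  exact hle

lemma sum_bij_ordering {W : Type*} [Fintype W] (N : ℕ) (o : ℕ → W)
    (ho : ∀ v : W, ∃! t : ℕ, t < N ∧ o t = v) (F : W → ℤ) :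
    ∑ t ∈ Finset.range N, F (o t) = ∑ v, F v := by
  refine Finset.sum_bij (fun t _ => o t) (fun t _ => Finset.mem_univ _) ?_ ?_ (fun t _ => rfl)
  · intro t₁ h₁ t₂ h₂ heq
    obtain ⟨s, _, huniq⟩ := ho (o t₁)
    rw [Finset.mem_range] at h₁ h₂
    have e1 := huniq t₁ ⟨h₁, rfl⟩
    have e2 := huniq t₂ ⟨h₂, heq.symm⟩
    omega
  · intro v _
    obtain ⟨t, ⟨htN, hto⟩, -⟩ := ho v
    exact ⟨t, Finset.mem_range.mpr htN, hto⟩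

end RadioAux

/-- For any ordering `z_0, …, z_{2mn-1}` of the vertices of `G = P_{m,k} □ T`, the total
consecutive distance satisfies
`∑_{t=0}^{2mn-2} d_G(z_t, z_{t+1}) ≤ (2mn - 1)(d_p + 1 - ε) + 4m·L(T)`. -/
theorem total_consecutive_distance_upper_bound
    {Vt : Type*} [Fintype Vt] (m k n : ℕ) [NeZero m] (hm : 3 ≤ m) (hk : 1 ≤ k)
    (T : SimpleGraph Vt) (hT : T.IsTree) (hn : Fintype.card Vt = n)
    (o : ℕ → (Bool × ZMod m) × Vt)
    (ho : ∀ v : (Bool × ZMod m) × Vt, ∃! t : ℕ, t < 2 * m * n ∧ o t = v) :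
    (∑ t ∈ Finset.range (2 * m * n - 1),
        (((genPetersen m k).boxProd T).dist (o t) (o (t + 1)) : ℤ)) ≤
      ((2 * m * n : ℤ) - 1) * ((graphDiam (genPetersen m k) : ℤ) + 1 - eps T) +
        4 * m * totalLevel T := by
  classical
  have hVt : Nonempty Vt := hT.isConnected.nonempty
  have hn1 : 1 ≤ n := by rw [← hn]; exact Fintype.card_pos
  set N := 2 * m * n with hNdef
  have hN6 : 6 ≤ N := by
    calc 6 = 2 * 3 * 1 := by norm_num
    _ ≤ 2 * m * n := by
        apply Nat.mul_le_mul
        · exact Nat.mul_le_mul_left 2 hm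
        · exact hn1
  have hconnP := RadioAux.genPetersen_connected m k hm
  set D : ℤ := (graphDiam (genPetersen m k) : ℤ) with hD
  set lvl : ℕ → ℤ := fun t => (level T (o t).2 : ℤ) with hlvl
  have key : ∀ t : ℕ, (((genPetersen m k).boxProd T).dist (o t) (o (t + 1)) : ℤ) ≤
      D + 1 - eps T + lvl t + lvl (t + 1) := by
    intro t
    have h1 := RadioAux.boxProd_dist_le hconnP hT.isConnected (o t) (o (t + 1))
    have h2 : (genPetersen m k).dist (o t).1 (o (t + 1)).1 ≤ graphDiam (genPetersen m k) :=
      Finset.le_sup (f := fun p : (Bool × ZMod m) × (Bool × ZMod m) =>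
        (genPetersen m k).dist p.1 p.2)
        (Finset.mem_univ ((o t).1, (o (t + 1)).1))
    have h3 := RadioAux.tree_dist_bound T hT (o t).2 (o (t + 1)).2
    have h1' : (((genPetersen m k).boxProd T).dist (o t) (o (t + 1)) : ℤ) ≤
        ((genPetersen m k).dist (o t).1 (o (t + 1)).1 : ℤ) + (T.dist (o t).2 (o (t + 1)).2 : ℤ) := by
      exact_mod_cast h1
    have h2' : ((genPetersen m k).dist (o t).1 (o (t + 1)).1 : ℤ) ≤ D := by
      rw [hD]; exact_mod_cast h2
    simp only [hlvl]
    linarith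
  set S : ℤ := ∑ t ∈ Finset.range N, lvl t with hSdef
  have hS : S = (2 * m : ℤ) * totalLevel T := by
    have hre := RadioAux.sum_bij_ordering N o ho (fun v => (level T v.2 : ℤ))
    rw [hSdef]
    simp only [hlvl]
    rw [hre, Fintype.sum_prod_type]
    have hinner : ∀ x : Bool × ZMod m,
        (∑ y : Vt, ((level T ((x, y) : (Bool × ZMod m) × Vt).2) : ℤ)) = (totalLevel T : ℤ) := by
      intro x
      rw [totalLevel]
      push_cast
      rfl
    rw [Finset.sum_congr rfl fun x _ => hinner x, Finset.sum_const, Finset.card_univ]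
    have hcard : Fintype.card (Bool × ZMod m) = 2 * m := by
      rw [Fintype.card_prod, Fintype.card_bool, ZMod.card]
    rw [hcard, nsmul_eq_mul]
    push_cast
    ring
  have hlvl_nonneg : ∀ t : ℕ, 0 ≤ lvl t := fun t => Int.ofNat_nonneg _
  have hS1 : ∑ t ∈ Finset.range (N - 1), lvl t ≤ S := by
    apply Finset.sum_le_sum_of_subset_of_nonneg
    · exact Finset.range_subset_range.mpr (by omega)
    · exact fun i _ _ => hlvl_nonneg i
  have hS2 : ∑ t ∈ Finset.range (N - 1), lvl (t + 1) ≤ S := by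
    have hsucc := Finset.sum_range_succ' lvl (N - 1)
    rw [show N - 1 + 1 = N from by omega] at hsucc
    rw [hSdef, hsucc]
    linarith [hlvl_nonneg 0]
  calc (∑ t ∈ Finset.range (N - 1),
        (((genPetersen m k).boxProd T).dist (o t) (o (t + 1)) : ℤ))
      ≤ ∑ t ∈ Finset.range (N - 1), (D + 1 - eps T + lvl t + lvl (t + 1)) :=
        Finset.sum_le_sum fun t _ => key t
    _ = ((N - 1 : ℕ) : ℤ) * (D + 1 - eps T) + (∑ t ∈ Finset.range (N - 1), lvl t)
        + ∑ t ∈ Finset.range (N - 1), lvl (t + 1) := by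
        rw [Finset.sum_add_distrib, Finset.sum_add_distrib, Finset.sum_const,
          Finset.card_range, nsmul_eq_mul]
    _ ≤ ((N - 1 : ℕ) : ℤ) * (D + 1 - eps T) + S + S := by linarith
    _ = ((2 * m * n : ℤ) - 1) * (D + 1 - eps T) + 4 * m * totalLevel T := by
        rw [hS]
        have hcast : ((N - 1 : ℕ) : ℤ) = (2 * m * n : ℤ) - 1 := by
          rw [hNdef]
          push_cast [Nat.cast_sub (by omega : 1 ≤ 2 * m * n)]
          ring
        rw [hcast]
        push_cast
        ring


end RadioPaper
end

section
/- Let G be a finite connected graph with N vertices and let f be a radio labeling of G. Let z_0, z_1, …, z_{N−1} be the ordering of the vertices of G with 0 ≤ f(z_0) < f(z_1) < … < f(z_{N−1}). Then span(f) ≥ f(z_{N−1}) − f(z_0) ≥ (N − 1)(diam(G) + 1) − ∑_{i=0}^{N−2} d(z_i, z_{i+1}). -/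
open Finset

namespace RadioPaper

variable {V : Type*}

theorem sub_le_radioSpan [Fintype V] (f : V → ℕ) (u v : V) :
    (f u : ℤ) - f v ≤ radioSpan f := by
  have h : f u - f v ≤ radioSpan f :=
    Finset.le_sup (f := fun p : V × V => f p.1 - f p.2) (Finset.mem_univ (u, v))
  omega

theorem IsRadioLabeling.diam_add_one_sub_dist_le [Fintype V] {G : SimpleGraph V} {f : V → ℕ}
    (hf : IsRadioLabeling G f) {u v : V} (huv : f u < f v) :
    (graphDiam G : ℤ) + 1 - G.dist u v ≤ (f v : ℤ) - f u := by
  have hradio := hf u v fun h => huv.ne (congrArg f h)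
  rwa [abs_sub_comm, abs_of_pos (by omega)] at hradio

theorem IsRadioLabeling.mul_diam_add_one_sub_sum_dist_le [Fintype V] {G : SimpleGraph V}
    {f : V → ℕ} (hf : IsRadioLabeling G f) (o : ℕ → V) (n : ℕ)
    (hstep : ∀ i < n, f (o i) < f (o (i + 1))) :
    (n : ℤ) * (graphDiam G + 1) - ∑ i ∈ range n, (G.dist (o i) (o (i + 1)) : ℤ) ≤
      (f (o n) : ℤ) - f (o 0) := by
  calc (n : ℤ) * (graphDiam G + 1) - ∑ i ∈ range n, (G.dist (o i) (o (i + 1)) : ℤ)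
      = ∑ i ∈ range n, ((graphDiam G : ℤ) + 1 - G.dist (o i) (o (i + 1))) := by
        simp [Finset.sum_sub_distrib]
    _ ≤ ∑ i ∈ range n, ((f (o (i + 1)) : ℤ) - f (o i)) :=
        Finset.sum_le_sum fun i hi => hf.diam_add_one_sub_dist_le (hstep i (mem_range.mp hi))
    _ = (f (o n) : ℤ) - f (o 0) := Finset.sum_range_sub (fun i => (f (o i) : ℤ)) n

theorem span_lower_bound_of_ordering_general
    {V : Type*} [Fintype V] (G : SimpleGraph V)
    (f : V → ℕ) (hf : IsRadioLabeling G f)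
    (o : ℕ → V)
    (hmono : ∀ s t : ℕ, s < t → t < Fintype.card V → f (o s) < f (o t)) :
    (f (o (Fintype.card V - 1)) : ℤ) - f (o 0) ≤ radioSpan f ∧
    ((Fintype.card V : ℤ) - 1) * (graphDiam G + 1) -
        ∑ i ∈ Finset.range (Fintype.card V - 1), (G.dist (o i) (o (i + 1)) : ℤ) ≤
      (f (o (Fintype.card V - 1)) : ℤ) - f (o 0) := by
  refine ⟨sub_le_radioSpan f _ _, le_trans ?_ <|
    hf.mul_diam_add_one_sub_sum_dist_le o _ fun i hi => hmono i (i + 1) (by omega) (by omega)⟩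
  -- `≤` rather than `=`: the natural subtraction truncates when `V` is empty
  have hcard : (Fintype.card V : ℤ) - 1 ≤ ((Fintype.card V - 1 : ℕ) : ℤ) := by omega
  gcongr

/-- For any radio labeling `f` of a connected graph `G` on `N` vertices, ordering the
vertices as `z_0, …, z_{N-1}` with strictly increasing labels, the span of `f` is at least
`f(z_{N-1}) - f(z_0) ≥ (N-1)(diam G + 1) - ∑_{i=0}^{N-2} d(z_i, z_{i+1})`. -/
theorem span_lower_bound_of_ordering
    {V : Type*} [Fintype V] (G : SimpleGraph V) (hG : G.Connected)
    (f : V → ℕ) (hf : IsRadioLabeling G f)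
    (o : ℕ → V) (ho : ∀ v : V, ∃! t : ℕ, t < Fintype.card V ∧ o t = v)
    (hmono : ∀ s t : ℕ, s < t → t < Fintype.card V → f (o s) < f (o t)) :
    (f (o (Fintype.card V - 1)) : ℤ) - f (o 0) ≤ radioSpan f ∧
    ((Fintype.card V : ℤ) - 1) * (graphDiam G + 1) -
        ∑ i ∈ Finset.range (Fintype.card V - 1), (G.dist (o i) (o (i + 1)) : ℤ) ≤
      (f (o (Fintype.card V - 1)) : ℤ) - f (o 0) :=
  span_lower_bound_of_ordering_general G f hf o hmono

end RadioPaper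
end
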